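/- arXiv:math/0310335 — 4 statements merged into one kernel-verified Lean document; each statement's English description precedes it below -/
import Mathlib

section
/- Let P₁ ⊆ {0,1}* be a maximal prefix code over the two-letter alphabet {0,1}, and let P₂ = { p ∈ {0,1}* : p is a strict prefix of some element of P₁ }. Then P = P₁ ∪ P₂# is a maximal prefix code over the three-letter alphabet {0,1,#}. -/
/-- The three-letter alphabet {0,1,#}. -/
inductive Alph3 : Type
  | b0 | b1 | hash
  deriving DecidableEq

/-- A prefix code: no element is a strict prefix of another element. -/
def PrefixCode {α : Type*} (C : Set (List α)) : Prop :=
  ∀ u ∈ C, ∀ v ∈ C, u <+: v → u = v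

/-- A maximal prefix code among sets of words contained in `W`:
a prefix code `C ⊆ W` that is not a strict subset of any prefix code `⊆ W`. -/
def MaxPrefixCodeOn {α : Type*} (W C : Set (List α)) : Prop :=
  C ⊆ W ∧ PrefixCode C ∧
    ∀ D : Set (List α), D ⊆ W → PrefixCode D → C ⊆ D → D = C

/-- A maximal prefix code over the full alphabet. -/
def MaxPrefixCode {α : Type*} (C : Set (List α)) : Prop :=
  MaxPrefixCodeOn Set.univ C

/-- {0,1}* : the words over the sub-alphabet {0,1} (no # occurs). -/
def BitWords : Set (List Alph3) := {w | Alph3.hash ∉ w}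

/-- {0,1}*# : the words v# with v ∈ {0,1}*. -/
def HashedWords : Set (List Alph3) := {w | ∃ v ∈ BitWords, w = v ++ [Alph3.hash]}

/-!
A word `w` is comparable with some codeword in every maximal prefix code, and conversely a prefix
code with this property is maximal. Now take any word `w` over `{0,1,#}`. If `w` contains no `#`,
it is comparable with a codeword of `P₁`. Otherwise write `w = p # t` with `p ∈ {0,1}*`, and take
`q ∈ P₁` comparable with `p`: either `q` is a prefix of `p`, hence of `w`, or `p` is a strict
prefix of `q`, and then `p#` is a codeword of `P₂#` and a prefix of `w`.
-/

variable {α : Type*}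

theorem maxPrefixCodeOn_iff {W C : Set (List α)} :
    MaxPrefixCodeOn W C ↔
      C ⊆ W ∧ PrefixCode C ∧ ∀ w ∈ W, ∃ c ∈ C, c <+: w ∨ w <+: c := by
  refine ⟨fun ⟨hCW, hC, hmax⟩ => ⟨hCW, hC, fun w hw => ?_⟩, fun ⟨hCW, hC, hcomp⟩ => ?_⟩
  · by_contra! hinc
    have hcode : PrefixCode (insert w C) := by
      rintro u (rfl | hu) v (rfl | hv) huv
      · rfl
      · exact absurd huv (hinc v hv).2
      · exact absurd huv (hinc u hu).1
      · exact hC u hu v hv huv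
    have hwC : w ∈ C :=
      hmax _ (Set.insert_subset hw hCW) hcode (Set.subset_insert w C) ▸ Set.mem_insert w C
    exact (hinc w hwC).1 (List.prefix_refl w)
  · refine ⟨hCW, hC, fun D hDW hD hCD => Set.Subset.antisymm ?_ hCD⟩
    intro w hw
    obtain ⟨c, hc, hcw | hwc⟩ := hcomp w (hDW hw)
    · exact hD c (hCD hc) w hw hcw ▸ hc
    · exact (hD w hw c (hCD hc) hwc).symm ▸ hc

theorem List.exists_eq_append_cons_of_mem {a : α} {w : List α} (h : a ∈ w) :
    ∃ p t, a ∉ p ∧ w = p ++ a :: t := by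
  induction w with
  | nil => simp at h
  | cons b w ih =>
    by_cases hb : b = a
    · exact ⟨[], w, List.not_mem_nil, by rw [hb]; rfl⟩
    · obtain ⟨p, t, hp, rfl⟩ := ih ((List.mem_cons.1 h).resolve_left (Ne.symm hb))
      exact ⟨b :: p, t, by simp [Ne.symm hb, hp], rfl⟩

theorem List.IsPrefix.not_prefix_of_ne {p q : List α} (hpq : p <+: q) (hne : p ≠ q) :
    ¬q <+: p :=
  fun hqp => hne (hpq.eq_of_length (le_antisymm hpq.length_le hqp.length_le))

def strictPrefixes (C : Set (List α)) : Set (List α) :=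
  {p | ∃ q ∈ C, p <+: q ∧ p ≠ q}

section Separator

variable {a : α} {C : Set (List α)}

theorem notMem_of_mem_strictPrefixes (hC : ∀ c ∈ C, a ∉ c) {p : List α}
    (hp : p ∈ strictPrefixes C) : a ∉ p := by
  obtain ⟨q, hq, hpq, -⟩ := hp
  exact fun hap => hC q hq (hpq.subset hap)

theorem prefixCode_union_image_strictPrefixes (hCa : ∀ c ∈ C, a ∉ c) (hC : PrefixCode C) :
    PrefixCode (C ∪ (· ++ [a]) '' strictPrefixes C) := by
  rintro u (hu | ⟨p, hp, rfl⟩) v (hv | ⟨p', hp', rfl⟩) huv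
  · exact hC u hu v hv huv
  · obtain ⟨q, hq, hp'q, hne⟩ := hp'
    rcases List.prefix_concat_iff.1 huv with rfl | hup'
    · exact absurd (by simp) (hCa _ hu)
    · have huq : u = q := hC u hu q hq (hup'.trans hp'q)
      exact absurd (huq ▸ hup') (hp'q.not_prefix_of_ne hne)
  · exact absurd (huv.subset (by simp)) (hCa v hv)
  · rcases List.prefix_concat_iff.1 huv with heq | hpp'
    · exact heq
    · exact absurd (hpp'.subset (by simp)) (notMem_of_mem_strictPrefixes hCa hp')

theorem MaxPrefixCodeOn.exists_prefix_or_prefix_union_image_strictPrefixes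
    (hC : MaxPrefixCodeOn {w | a ∉ w} C) (w : List α) :
    ∃ c ∈ C ∪ (· ++ [a]) '' strictPrefixes C, c <+: w ∨ w <+: c := by
  have hcomp := (maxPrefixCodeOn_iff.1 hC).2.2
  by_cases haw : a ∈ w
  · obtain ⟨p, t, hap, rfl⟩ := List.exists_eq_append_cons_of_mem haw
    obtain ⟨q, hq, hqp | hpq⟩ := hcomp p hap
    · exact ⟨q, .inl hq, .inl (hqp.trans (List.prefix_append p _))⟩
    · by_cases hpq' : p = q
      · exact ⟨q, .inl hq, .inl (hpq' ▸ List.prefix_append p _)⟩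
      · exact ⟨p ++ [a], .inr ⟨p, ⟨q, hq, hpq, hpq'⟩, rfl⟩, .inl ⟨t, by simp⟩⟩
  · obtain ⟨c, hc, hcw⟩ := hcomp w haw
    exact ⟨c, .inl hc, hcw⟩

theorem MaxPrefixCodeOn.maxPrefixCode_union_image_strictPrefixes
    (hC : MaxPrefixCodeOn {w | a ∉ w} C) :
    MaxPrefixCode (C ∪ (· ++ [a]) '' strictPrefixes C) :=
  maxPrefixCodeOn_iff.2
    ⟨Set.subset_univ _, prefixCode_union_image_strictPrefixes (fun _ hc => hC.1 hc) hC.2.1,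
      fun w _ => hC.exists_prefix_or_prefix_union_image_strictPrefixes w⟩

end Separator

theorem statement1 (P₁ : Set (List Alph3)) (hP₁ : MaxPrefixCodeOn BitWords P₁) :
    MaxPrefixCode
      (P₁ ∪ (fun p => p ++ [Alph3.hash]) ''
        {p : List Alph3 | ∃ q ∈ P₁, p <+: q ∧ p ≠ q}) :=
  hP₁.maxPrefixCode_union_image_strictPrefixes
end

section
/- Let P₁ ⊆ {0,1}* be a maximal prefix code over the two-letter alphabet {0,1}, let P₂ = { v ∈ {0,1}* : v is a strict prefix of some element of P₁ }, and for each v ∈ P₂ let P(v) be a maximal prefix code over the three-letter alphabet {0,1,#}. Then P = P₁ ∪ ⋃_{v ∈ P₂} v#·P(v) is a maximal prefix code over {0,1,#}. -/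
/-- A hash-free prefix of `v ++ # ++ s` is a prefix of `v`. -/
lemma bit_prefix_hashed {u v s : List Alph3} (hu : Alph3.hash ∉ u)
    (h : u <+: v ++ [Alph3.hash] ++ s) : u <+: v := by
  by_cases hl : u.length ≤ v.length
  · exact List.prefix_of_prefix_length_le h ((v.prefix_append [Alph3.hash]).trans
      ((v ++ [Alph3.hash]).prefix_append s)) hl
  · exfalso
    have h2 : v ++ [Alph3.hash] <+: u := by
      refine List.prefix_of_prefix_length_le ((v ++ [Alph3.hash]).prefix_append s) h ?_
      simpa using Nat.lt_of_not_le hl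
    exact hu (h2.subset (by simp))

/-- Cancellation for hashed words. -/
lemma hashed_prefix_hashed {v s v' s' : List Alph3} (hv : Alph3.hash ∉ v)
    (hv' : Alph3.hash ∉ v') (h : v ++ [Alph3.hash] ++ s <+: v' ++ [Alph3.hash] ++ s') :
    v = v' ∧ s <+: s' := by
  have h1 : v <+: v' :=
    bit_prefix_hashed hv (((v.prefix_append [Alph3.hash]).trans
      ((v ++ [Alph3.hash]).prefix_append s)).trans h)
  have hlen : v'.length ≤ v.length := by
    by_contra hlt
    have h2 : v ++ [Alph3.hash] <+: v' := by
      refine List.prefix_of_prefix_length_le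
        (((v ++ [Alph3.hash]).prefix_append s).trans h)
        ((v'.prefix_append [Alph3.hash]).trans ((v' ++ [Alph3.hash]).prefix_append s')) ?_
      simpa using Nat.lt_of_not_le hlt
    exact hv' (h2.subset (by simp))
  have hveq : v = v' := h1.sublist.eq_of_length (le_antisymm h1.length_le hlen)
  subst hveq
  refine ⟨rfl, ?_⟩
  obtain ⟨t, ht⟩ := h
  exact ⟨t, List.append_cancel_left ((List.append_assoc (v ++ [Alph3.hash]) s t).symm.trans ht)⟩

lemma cancel_hashed {v s t : List Alph3}
    (h : v ++ [Alph3.hash] ++ s = v ++ [Alph3.hash] ++ t) : s = t :=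
  List.append_cancel_left h

lemma split_at_hash {w : List Alph3} (h : Alph3.hash ∈ w) :
    ∃ v s, Alph3.hash ∉ v ∧ w = v ++ [Alph3.hash] ++ s := by
  induction w with
  | nil => simp at h
  | cons a t ih =>
    by_cases ha : a = Alph3.hash
    · exact ⟨[], t, by simp, by simp [ha]⟩
    · have ht : Alph3.hash ∈ t := by
        rcases List.mem_cons.mp h with h' | h'
        · exact absurd h'.symm ha
        · exact h'
      obtain ⟨v, s, hv, hw⟩ := ih ht
      exact ⟨a :: v, s, by simp [hv, Ne.symm ha], by simp [hw]⟩

theorem statement3 (P₁ : Set (List Alph3)) (hP₁ : MaxPrefixCodeOn BitWords P₁)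
    (Pv : List Alph3 → Set (List Alph3))
    (hPv : ∀ v ∈ {p : List Alph3 | ∃ q ∈ P₁, p <+: q ∧ p ≠ q},
      MaxPrefixCode (Pv v)) :
    MaxPrefixCode
      (P₁ ∪ ⋃ v ∈ {p : List Alph3 | ∃ q ∈ P₁, p <+: q ∧ p ≠ q},
        (fun s => v ++ [Alph3.hash] ++ s) '' Pv v) := by
  obtain ⟨hP₁W, hP₁pc, hP₁max⟩ := hP₁
  set P₂ : Set (List Alph3) := {p : List Alph3 | ∃ q ∈ P₁, p <+: q ∧ p ≠ q} with hP₂def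
  set P : Set (List Alph3) :=
    P₁ ∪ ⋃ v ∈ P₂, (fun s => v ++ [Alph3.hash] ++ s) '' Pv v with hPdef
  -- membership characterization
  have hmemP : ∀ w, w ∈ P ↔ w ∈ P₁ ∨ ∃ v ∈ P₂, ∃ s ∈ Pv v, w = v ++ [Alph3.hash] ++ s := by
    intro w
    simp only [hPdef, Set.mem_union, Set.mem_iUnion, Set.mem_image]
    constructor
    · rintro (h | ⟨v, hv, s, hs, rfl⟩)
      · exact Or.inl h
      · exact Or.inr ⟨v, hv, s, hs, rfl⟩
    · rintro (h | ⟨v, hv, s, hs, rfl⟩)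
      · exact Or.inl h
      · exact Or.inr ⟨v, hv, s, hs, rfl⟩
  have hbit : ∀ u ∈ P₁, Alph3.hash ∉ u := fun u hu => hP₁W hu
  have hP₂bit : ∀ v ∈ P₂, Alph3.hash ∉ v := by
    rintro v ⟨q, hq, hpre, -⟩ hmem
    exact hbit q hq (hpre.subset hmem)
  -- P is a prefix code
  have hPpc : PrefixCode P := by
    intro u hu w hw hpre
    rcases (hmemP u).mp hu with hu1 | ⟨v, hv, s, hs, rfl⟩
    · rcases (hmemP w).mp hw with hw1 | ⟨v', hv', s', hs', rfl⟩
      · exact hP₁pc u hu1 w hw1 hpre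
      · exfalso
        have hupre : u <+: v' := bit_prefix_hashed (hbit u hu1) hpre
        obtain ⟨q, hq, hvq, hvne⟩ := hv'
        have := hP₁pc u hu1 q hq (hupre.trans hvq)
        have hlt : v'.length < q.length :=
          lt_of_le_of_ne hvq.length_le (fun h => hvne (hvq.sublist.eq_of_length h))
        have h2 := hupre.length_le
        rw [this] at h2
        omega
    · rcases (hmemP w).mp hw with hw1 | ⟨v', hv', s', hs', rfl⟩
      · exact absurd (hpre.subset (by simp)) (hbit w hw1)
      · obtain ⟨rfl, hss⟩ := hashed_prefix_hashed (hP₂bit v hv) (hP₂bit v' hv') hpre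
        rw [(hPv v hv).2.1 s hs s' hs' hss]
  refine ⟨fun _ _ => trivial, hPpc, ?_⟩

  intro D _ hDpc hPD
  refine Set.Subset.antisymm ?_ hPD
  intro w hw
  by_cases hwhash : Alph3.hash ∈ w
  · -- w contains a hash
    obtain ⟨v, s, hvbit, rfl⟩ := split_at_hash hwhash
    -- no element of P₁ is a prefix of v
    have hnopre : ∀ q ∈ P₁, ¬ q <+: v := by
      intro q hq hqv
      have hqw : q <+: v ++ [Alph3.hash] ++ s :=
        hqv.trans ((v.prefix_append [Alph3.hash]).trans ((v ++ [Alph3.hash]).prefix_append s))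
      have := hDpc q (hPD ((hmemP q).mpr (Or.inl hq))) _ hw hqw
      exact hbit q hq (this ▸ (by simp : Alph3.hash ∈ v ++ [Alph3.hash] ++ s))
    -- v ∈ P₂
    have hvP₂ : v ∈ P₂ := by
      by_contra hv
      have hpcv : PrefixCode (P₁ ∪ {v}) := by
        rintro a (ha | rfl) b (hb | rfl) hab
        · exact hP₁pc a ha b hb hab
        · exact absurd hab (hnopre a ha)
        · exact absurd (fun hne => hv ⟨b, hb, hab, hne⟩) (not_not.mpr
            (fun h => absurd (h ▸ hab) (hnopre b hb)))
        · rfl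
      have hsub : P₁ ∪ {v} ⊆ BitWords := by
        rintro a (ha | rfl)
        · exact hP₁W ha
        · exact hvbit
      have := hP₁max (P₁ ∪ {v}) hsub hpcv Set.subset_union_left
      have hvP₁ : v ∈ P₁ := this ▸ (Set.mem_union_right _ rfl)
      exact hnopre v hvP₁ (List.prefix_refl v)
    -- s ∈ Pv v
    obtain ⟨-, hPvpc, hPvmax⟩ := hPv v hvP₂
    have hsPv : s ∈ Pv v := by
      have hpcs : PrefixCode (Pv v ∪ {s}) := by
        have key : ∀ t ∈ Pv v, t <+: s ∨ s <+: t → t = s := by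
          intro t ht hts
          have htD : v ++ [Alph3.hash] ++ t ∈ D :=
            hPD ((hmemP _).mpr (Or.inr ⟨v, hvP₂, t, ht, rfl⟩))
          rcases hts with h' | h'
          · have := hDpc _ htD _ hw ((List.prefix_append_right_inj _).mpr h')
            exact cancel_hashed this
          · have := hDpc _ hw _ htD ((List.prefix_append_right_inj _).mpr h')
            exact (cancel_hashed this).symm
        rintro a (ha | rfl) b (hb | rfl) hab
        · exact hPvpc a ha b hb hab
        · exact key a ha (Or.inl hab)
        · exact (key b hb (Or.inr hab)).symm
        · rfl
      have := hPvmax (Pv v ∪ {s}) (fun _ _ => trivial) hpcs Set.subset_union_left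
      exact this ▸ (Set.mem_union_right _ rfl)
    exact (hmemP _).mpr (Or.inr ⟨v, hvP₂, s, hsPv, rfl⟩)
  · -- w is a bit word
    have hpcw : PrefixCode (P₁ ∪ {w}) := by
      have key : ∀ a ∈ P₁, a <+: w ∨ w <+: a → a = w := by
        intro a ha haw
        have haD : a ∈ D := hPD ((hmemP a).mpr (Or.inl ha))
        rcases haw with h' | h'
        · exact hDpc a haD w hw h'
        · exact (hDpc w hw a haD h').symm
      rintro a (ha | rfl) b (hb | rfl) hab
      · exact hP₁pc a ha b hb hab
      · exact key a ha (Or.inl hab)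
      · exact (key b hb (Or.inr hab)).symm
      · rfl
    have hsub : P₁ ∪ {w} ⊆ BitWords := by
      rintro a (ha | rfl)
      · exact hP₁W ha
      · exact hwhash
    have := hP₁max (P₁ ∪ {w}) hsub hpcw Set.subset_union_left
    exact (hmemP w).mpr (Or.inl (this ▸ (Set.mem_union_right _ rfl)))
end

section
/- For every integer i ≥ 5 there exists a maximal prefix code P ⊆ {0,1}* ∪ {0,1}*# over the three-letter alphabet {0,1,#} with |P| = 1 + 2i, and three pairwise distinct words u, v, w ∈ {0,1}* such that all nine words u0, u1, u#, v0, v1, v#, w0, w1, w# belong to P. -/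
/-! A complete prefix code over `{0,1,#}` is the set of leaves of a ternary tree, and replacing a
leaf `x ∈ {0,1}*` by its children `x0, x1, x#` keeps it complete and prefix-free while adding two
words. Expanding `ε, 0, 1, 00, 01` in turn from `{ε}` gives an 11-word code in which `1, 00, 01`
have all their children; from then on, if `u, v, w` have all their children in the code, expanding
`w0` gives a code in which `u, v, w0` do. -/

section PrefixCodes

variable {α : Type*}

def PrefixComplete (C : Set (List α)) : Prop :=
  ∀ z : List α, ∃ p ∈ C, p <+: z ∨ z <+: p

theorem PrefixCode.maxPrefixCode {C : Set (List α)} (hC : PrefixCode C)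
    (hc : PrefixComplete C) : MaxPrefixCode C := by
  refine ⟨Set.subset_univ C, hC, fun D _ hD hCD => (Set.Subset.antisymm ?_ hCD)⟩
  intro z hz
  obtain ⟨p, hp, hpz | hzp⟩ := hc z
  · rwa [← hD p (hCD hp) z hz hpz]
  · rwa [hD z hz p (hCD hp) hzp]

theorem PrefixCode.notMem_of_append_singleton_mem {C : Set (List α)} (hC : PrefixCode C)
    {x : List α} {a : α} (h : x ++ [a] ∈ C) : x ∉ C :=
  fun hx => by simpa using hC x hx _ h (List.prefix_append x [a])

def expandLeaf (C : Set (List α)) (x : List α) : Set (List α) :=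
  C \ {x} ∪ Set.range fun a => x ++ [a]

section expandLeaf

variable {C : Set (List α)} {x : List α}

theorem mem_expandLeaf_of_mem_of_ne {y : List α} (hy : y ∈ C) (hyx : y ≠ x) :
    y ∈ expandLeaf C x :=
  Or.inl ⟨hy, hyx⟩

theorem append_singleton_mem_expandLeaf (a : α) : x ++ [a] ∈ expandLeaf C x :=
  Or.inr ⟨a, rfl⟩

theorem PrefixCode.expandLeaf (hC : PrefixCode C) (hx : x ∈ C) :
    PrefixCode (expandLeaf C x) := by
  rintro u (⟨hu, hux⟩ | ⟨a, rfl⟩) v (⟨hv, hvx⟩ | ⟨b, rfl⟩) huv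
  · exact hC u hu v hv huv
  · rcases List.prefix_concat_iff.mp huv with h | h
    · exact h
    · exact absurd (hC u hu x hx h) hux
  · exact absurd (hC x hx v hv ((List.prefix_append x [a]).trans huv)).symm hvx
  · exact huv.eq_of_length_le (by simp)

theorem PrefixComplete.expandLeaf [Nonempty α] (hc : PrefixComplete C) :
    PrefixComplete (expandLeaf C x) := by
  intro z
  obtain ⟨p, hp, hcomp⟩ := hc z
  by_cases hpx : p = x
  · subst hpx
    have hchild := append_singleton_mem_expandLeaf (C := C) (x := p)
    rcases hcomp with ⟨_ | ⟨a, r⟩, rfl⟩ | hzp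
    · exact ⟨_, hchild (Classical.arbitrary α), Or.inr (by simp)⟩
    · exact ⟨_, hchild a, Or.inl ⟨r, by simp⟩⟩
    · exact ⟨_, hchild (Classical.arbitrary α), Or.inr (hzp.trans (List.prefix_append p _))⟩
  · exact ⟨p, mem_expandLeaf_of_mem_of_ne hp hpx, hcomp⟩

theorem Set.Finite.expandLeaf [Finite α] (hC : C.Finite) : (expandLeaf C x).Finite :=
  hC.sdiff.union (Set.finite_range _)

theorem ncard_expandLeaf [Finite α] (hC : PrefixCode C) (hfin : C.Finite) (hx : x ∈ C) :
    (expandLeaf C x).ncard + 1 = C.ncard + Nat.card α := by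
  have hdisj : Disjoint (C \ {x}) (Set.range fun a => x ++ [a]) := by
    rw [Set.disjoint_right]
    rintro _ ⟨a, rfl⟩ ⟨hxa, -⟩
    exact hC.notMem_of_append_singleton_mem hxa hx
  have hinj : Function.Injective fun a : α => x ++ [a] := fun a b h => by simpa using h
  rw [expandLeaf, Set.ncard_union_eq hdisj hfin.sdiff (Set.finite_range _),
    Set.ncard_range_of_injective hinj, add_right_comm, Set.ncard_sdiff_singleton_add_one hx hfin]

end expandLeaf

end PrefixCodes

open Alph3

instance : Fintype Alph3 :=
  ⟨{b0, b1, hash}, fun x => by cases x <;> decide⟩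

instance : Inhabited Alph3 :=
  ⟨b0⟩

theorem card_alph3 : Nat.card Alph3 = 3 := by
  rw [Nat.card_eq_fintype_card]
  rfl

theorem append_singleton_mem_bitWords {x : List Alph3} (hx : x ∈ BitWords) {a : Alph3}
    (ha : a ≠ hash) : x ++ [a] ∈ BitWords := by
  simpa [BitWords, eq_comm] using And.intro hx ha

theorem expandLeaf_subset {P : Set (List Alph3)} (hP : P ⊆ BitWords ∪ HashedWords)
    {x : List Alph3} (hx : x ∈ BitWords) : expandLeaf P x ⊆ BitWords ∪ HashedWords := by
  rintro _ (⟨hz, -⟩ | ⟨a, rfl⟩)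
  · exact hP hz
  · cases a
    · exact Or.inl (append_singleton_mem_bitWords hx (by decide))
    · exact Or.inl (append_singleton_mem_bitWords hx (by decide))
    · exact Or.inr ⟨x, hx, rfl⟩

-- `i` is the number of internal nodes of the code tree, each of which contributes two leaves.
structure BitHashCode (i : ℕ) (P : Set (List Alph3)) : Prop where
  finite : P.Finite
  subset : P ⊆ BitWords ∪ HashedWords
  prefixCode : PrefixCode P
  prefixComplete : PrefixComplete P
  ncard_eq : P.ncard = 1 + 2 * i

theorem bitHashCode_singleton_nil : BitHashCode 0 {[]} where
  finite := Set.finite_singleton _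
  subset := by simp [BitWords]
  prefixCode := by simp [PrefixCode]
  prefixComplete z := ⟨[], rfl, Or.inl z.nil_prefix⟩
  ncard_eq := by simp

theorem BitHashCode.expandLeaf {i : ℕ} {P : Set (List Alph3)} (hP : BitHashCode i P)
    {x : List Alph3} (hxP : x ∈ P) (hx : x ∈ BitWords) : BitHashCode (i + 1) (expandLeaf P x) where
  finite := hP.finite.expandLeaf
  subset := expandLeaf_subset hP.subset hx
  prefixCode := hP.prefixCode.expandLeaf hxP
  prefixComplete := hP.prefixComplete.expandLeaf
  ncard_eq := by
    have := ncard_expandLeaf hP.prefixCode hP.finite hxP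
    rw [card_alph3, hP.ncard_eq] at this
    omega

structure SaturatedTriple (P : Set (List Alph3)) (u v w : List Alph3) : Prop where
  u_mem : u ∈ BitWords
  v_mem : v ∈ BitWords
  w_mem : w ∈ BitWords
  u_ne_v : u ≠ v
  u_ne_w : u ≠ w
  v_ne_w : v ≠ w
  u_children : ∀ a, u ++ [a] ∈ P
  v_children : ∀ a, v ++ [a] ∈ P
  w_children : ∀ a, w ++ [a] ∈ P

theorem SaturatedTriple.expandLeaf {P : Set (List Alph3)} {u v w : List Alph3}
    (hP : PrefixCode P) (h : SaturatedTriple P u v w) :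
    SaturatedTriple (expandLeaf P (w ++ [b0])) u v (w ++ [b0]) := by
  have hw0 : w ++ [b0] ∈ P := h.w_children b0
  have ne_w0 {y : List Alph3} (hy : ∀ a, y ++ [a] ∈ P) : y ≠ w ++ [b0] :=
    fun e => hP.notMem_of_append_singleton_mem (hy b0) (e ▸ hw0)
  have keep {y : List Alph3} (hyw : y ≠ w) (hy : ∀ a, y ++ [a] ∈ P) (a : Alph3) :
      y ++ [a] ∈ _root_.expandLeaf P (w ++ [b0]) :=
    mem_expandLeaf_of_mem_of_ne (hy a) fun e => hyw (List.append_inj' e rfl).1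
  exact
    { u_mem := h.u_mem
      v_mem := h.v_mem
      w_mem := append_singleton_mem_bitWords h.w_mem (by decide)
      u_ne_v := h.u_ne_v
      u_ne_w := ne_w0 h.u_children
      v_ne_w := ne_w0 h.v_children
      u_children := keep h.u_ne_w h.u_children
      v_children := keep h.v_ne_w h.v_children
      w_children := append_singleton_mem_expandLeaf }

theorem exists_bitHashCode_five : ∃ P, BitHashCode 5 P ∧ SaturatedTriple P [b1] [b0, b0] [b0, b1] := by
  have h1 := bitHashCode_singleton_nil.expandLeaf (x := []) rfl (by simp [BitWords])
  have h2 := h1.expandLeaf (x := [b0]) (by simp [expandLeaf]) (by simp [BitWords])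
  have h3 := h2.expandLeaf (x := [b1]) (by simp [expandLeaf]) (by simp [BitWords])
  have h4 := h3.expandLeaf (x := [b0, b0]) (by simp [expandLeaf]) (by simp [BitWords])
  have h5 := h4.expandLeaf (x := [b0, b1]) (by simp [expandLeaf]) (by simp [BitWords])
  refine ⟨_, h5, ?_⟩
  constructor <;> simp [expandLeaf, BitWords]

theorem exists_bitHashCode (i : ℕ) (hi : 5 ≤ i) :
    ∃ P, BitHashCode i P ∧ ∃ u v w, SaturatedTriple P u v w := by
  induction i, hi using Nat.le_induction with
  | base =>
    obtain ⟨P, hP, h⟩ := exists_bitHashCode_five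
    exact ⟨P, hP, _, _, _, h⟩
  | succ i _ ih =>
    obtain ⟨P, hP, u, v, w, h⟩ := ih
    have h' := h.expandLeaf hP.prefixCode
    exact ⟨_, hP.expandLeaf (h.w_children b0) h'.w_mem, u, v, _, h'⟩

theorem statement14 (i : ℕ) (hi : 5 ≤ i) :
    ∃ P : Set (List Alph3), P.Finite ∧
      P ⊆ BitWords ∪ HashedWords ∧ MaxPrefixCode P ∧ P.ncard = 1 + 2 * i ∧
      ∃ u ∈ BitWords, ∃ v ∈ BitWords, ∃ w ∈ BitWords,
        u ≠ v ∧ u ≠ w ∧ v ≠ w ∧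
        u ++ [Alph3.b0] ∈ P ∧ u ++ [Alph3.b1] ∈ P ∧ u ++ [Alph3.hash] ∈ P ∧
        v ++ [Alph3.b0] ∈ P ∧ v ++ [Alph3.b1] ∈ P ∧ v ++ [Alph3.hash] ∈ P ∧
        w ++ [Alph3.b0] ∈ P ∧ w ++ [Alph3.b1] ∈ P ∧ w ++ [Alph3.hash] ∈ P := by
  obtain ⟨P, hP, u, v, w, h⟩ := exists_bitHashCode i hi
  exact ⟨P, hP.finite, hP.subset, hP.prefixCode.maxPrefixCode hP.prefixComplete, hP.ncard_eq,
    u, h.u_mem, v, h.v_mem, w, h.w_mem, h.u_ne_v, h.u_ne_w, h.v_ne_w,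
    h.u_children _, h.u_children _, h.u_children _, h.v_children _, h.v_children _,
    h.v_children _, h.w_children _, h.w_children _, h.w_children _⟩
end

section
/- Let π = σ_L ∘ ⋯ ∘ σ₁ be a composition of L permutations of ℕ, where each σ_j ∈ {γ₀, γ₁, γ₂, γ₀⁻¹, γ₁⁻¹, γ₂⁻¹}. Then π is the identity permutation of ℕ if and only if π(n) = n for every natural number n with n ≤ 2L + 3. Equivalently: π is not the identity if and only if there exists n ≤ 2L + 3 with π(n) ≠ n. -/
/-!
Every generator moves a point down by at most 2 and commutes with `m ↦ m + 3` on `[2, ∞)`.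
Hence a word `π` of length `L` satisfies `m ≤ π m + 2L` and `π (m + 3) = π m + 3` for `m ≥ 2L`,
so `π` is determined by its values below `2L + 3`, and fixing them forces `π = id`.
-/

/-- γ₀ = ∏ (3n | 3n+1 | 3n+2): adds 1 except on numbers ≡ 2 mod 3, which drop by 2. -/
def gamma0 : ℕ → ℕ := fun m => if m % 3 = 2 then m - 2 else m + 1

/-- γ₁ = ∏ (3n+1 | 3n+2 | 3n+3): fixes 0. -/
def gamma1 : ℕ → ℕ :=
  fun m => if m = 0 then 0 else if m % 3 = 0 then m - 2 else m + 1

/-- γ₂ = ∏ (3n+2 | 3n+3 | 3n+4): fixes 0 and 1. -/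
def gamma2 : ℕ → ℕ :=
  fun m => if m ≤ 1 then m else if m % 3 = 1 then m - 2 else m + 1

/-- γ₀⁻¹. -/
def gamma0inv : ℕ → ℕ := fun m => if m % 3 = 0 then m + 2 else m - 1

/-- γ₁⁻¹. -/
def gamma1inv : ℕ → ℕ :=
  fun m => if m = 0 then 0 else if m % 3 = 1 then m + 2 else m - 1

/-- γ₂⁻¹. -/
def gamma2inv : ℕ → ℕ :=
  fun m => if m ≤ 1 then m else if m % 3 = 2 then m + 2 else m - 1

/-- The six generators γ₀, γ₁, γ₂, γ₀⁻¹, γ₁⁻¹, γ₂⁻¹. -/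
def gammaGens : Set (ℕ → ℕ) :=
  {gamma0, gamma1, gamma2, gamma0inv, gamma1inv, gamma2inv}

section Composition

variable {d p : ℕ} {l : List (ℕ → ℕ)}

theorem le_foldr_comp_apply_add (hdrop : ∀ f ∈ l, ∀ m, m ≤ f m + d) (m : ℕ) :
    m ≤ l.foldr (· ∘ ·) id m + d * l.length := by
  induction l with
  | nil => simp
  | cons f t ih =>
    have ht := ih fun g hg => hdrop g (List.mem_cons_of_mem f hg)
    have hf := hdrop f List.mem_cons_self (t.foldr (· ∘ ·) id m)
    simp only [List.foldr_cons, Function.comp_apply, List.length_cons]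
    linarith

theorem foldr_comp_apply_add_period (hdrop : ∀ f ∈ l, ∀ m, m ≤ f m + d)
    (hper : ∀ f ∈ l, ∀ m, d ≤ m → f (m + p) = f m + p) {m : ℕ} (hm : d * l.length ≤ m) :
    l.foldr (· ∘ ·) id (m + p) = l.foldr (· ∘ ·) id m + p := by
  induction l with
  | nil => rfl
  | cons f t ih =>
    have hdrop_t : ∀ g ∈ t, ∀ m, m ≤ g m + d := fun g hg => hdrop g (List.mem_cons_of_mem f hg)
    have hper_t : ∀ g ∈ t, ∀ m, d ≤ m → g (m + p) = g m + p :=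
      fun g hg => hper g (List.mem_cons_of_mem f hg)
    rw [List.length_cons, mul_add_one] at hm
    -- the inner word lowers `m ≥ d * (|t| + 1)` by at most `d * |t|`, keeping it in `[d, ∞)` for `f`
    have hlow := le_foldr_comp_apply_add hdrop_t m
    simp only [List.foldr_cons, Function.comp_apply]
    rw [ih hdrop_t hper_t (by omega), hper f List.mem_cons_self _ (by omega)]

end Composition

theorem eq_id_of_apply_add_period {π : ℕ → ℕ} {k p : ℕ} (hp : 0 < p)
    (hper : ∀ m, k ≤ m → π (m + p) = π m + p) (hfix : ∀ n < k + p, π n = n) : π = id := by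
  funext n
  induction n using Nat.strong_induction_on with
  | _ n ih =>
    by_cases hn : n < k + p
    · exact hfix n hn
    · obtain ⟨m, rfl⟩ : ∃ m, n = m + p := ⟨n - p, by omega⟩
      rw [id, hper m (by omega), ih m (by omega), id]

theorem le_apply_add_two_of_mem_gammaGens {f : ℕ → ℕ} (hf : f ∈ gammaGens) (m : ℕ) :
    m ≤ f m + 2 := by
  rcases hf with rfl | rfl | rfl | rfl | rfl | rfl <;>
    simp only [gamma0, gamma1, gamma2, gamma0inv, gamma1inv, gamma2inv] <;>
    split_ifs <;> omega

theorem apply_add_three_of_mem_gammaGens {f : ℕ → ℕ} (hf : f ∈ gammaGens) {m : ℕ}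
    (hm : 2 ≤ m) : f (m + 3) = f m + 3 := by
  rcases hf with rfl | rfl | rfl | rfl | rfl | rfl <;>
    simp only [gamma0, gamma1, gamma2, gamma0inv, gamma1inv, gamma2inv] <;>
    split_ifs <;> omega

theorem statement17 (l : List (ℕ → ℕ)) (hl : ∀ f ∈ l, f ∈ gammaGens) :
    l.foldr (· ∘ ·) id = id ↔
      ∀ n : ℕ, n ≤ 2 * l.length + 3 → (l.foldr (· ∘ ·) id) n = n := by
  refine ⟨fun h n _ => by rw [h, id], fun hfix => ?_⟩
  have hdrop : ∀ f ∈ l, ∀ m, m ≤ f m + 2 :=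
    fun f hf => le_apply_add_two_of_mem_gammaGens (hl f hf)
  have hper : ∀ f ∈ l, ∀ m, 2 ≤ m → f (m + 3) = f m + 3 :=
    fun f hf _ => apply_add_three_of_mem_gammaGens (hl f hf)
  exact eq_id_of_apply_add_period three_pos
    (fun m hm => foldr_comp_apply_add_period hdrop hper hm) (fun n hn => hfix n hn.le)
end
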